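/- Let G=(V,E) be a finite simple graph and let [W,F] be any (not necessarily maximal) utter clique of G. Then every (x,y) ∈ ℝ^V × ℝ^E satisfying: x(W') + y(F' ∩ E(V∖W')) − y(E(W')) ≤ 1 for every maximal utter clique [W',F'] of G, y(δ(v)) ≤ x_v for every v ∈ V, and y_e ≥ 0 for every e ∈ E, also satisfies x(W) + y(F ∩ E(V∖W)) − y(E(W)) ≤ 1. -/

import Mathlib

open Finset
open scoped Classical

noncomputable section

variable {V : Type*} [Fintype V]

/-- A co-2-plex: a set of vertices inducing a subgraph of maximum degree at most 1. -/
def IsCo2Plex {α : Type*} (G : SimpleGraph α) (S : Finset α) : Prop :=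
  ∀ u ∈ S, (S.filter fun v => G.Adj u v).card ≤ 1

/-- Incidence vector of a vertex set. -/
def chiV {α : Type*} (S : Finset α) : α → ℝ := fun v => if v ∈ S then 1 else 0

/-- Incidence vector (on edges) of the set of edges with both endpoints in `S`. -/
def chiE {α : Type*} (G : SimpleGraph α) (S : Finset α) : G.edgeSet → ℝ :=
  fun e => if ∀ v ∈ (e : Sym2 α), v ∈ S then 1 else 0

/-- The co-2-plex polytope. -/
def co2PlexPolytope (G : SimpleGraph V) : Set (V → ℝ) :=
  convexHull ℝ {x | ∃ S : Finset V, IsCo2Plex G S ∧ x = chiV S}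

/-- The extended co-2-plex polytope. -/
def co2PlexPolytopeExt (G : SimpleGraph V) : Set ((V → ℝ) × (G.edgeSet → ℝ)) :=
  convexHull ℝ {p | ∃ S : Finset V, IsCo2Plex G S ∧ p = (chiV S, chiE G S)}

/-- δ(v): edges incident to `v`. -/
def inc (G : SimpleGraph V) (v : V) : Finset G.edgeSet :=
  univ.filter fun e => v ∈ (e : Sym2 V)

/-- E(W): edges with both endpoints in W. -/
def edgesIn (G : SimpleGraph V) (W : Finset V) : Finset G.edgeSet :=
  univ.filter fun e => ∀ v ∈ (e : Sym2 V), v ∈ W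

/-- E(V \ W): edges with both endpoints outside W. -/
def edgesOut (G : SimpleGraph V) (W : Finset V) : Finset G.edgeSet :=
  univ.filter fun e => ∀ v ∈ (e : Sym2 V), v ∉ W

/-- δ(W): edges with exactly one endpoint in W. -/
def edgesCut (G : SimpleGraph V) (W : Finset V) : Finset G.edgeSet :=
  univ.filter fun e => (∃ v ∈ (e : Sym2 V), v ∈ W) ∧ ∃ v ∈ (e : Sym2 V), v ∉ W

/-- The utter graph of `G`. -/
def utter (G : SimpleGraph V) : SimpleGraph (V ⊕ G.edgeSet) where
  Adj a b :=
    match a, b with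
    | Sum.inl u, Sum.inl v => G.Adj u v
    | Sum.inl w, Sum.inr e => w ∈ (e : Sym2 V) ∨ ∃ z ∈ (e : Sym2 V), G.Adj w z
    | Sum.inr e, Sum.inl w => w ∈ (e : Sym2 V) ∨ ∃ z ∈ (e : Sym2 V), G.Adj w z
    | Sum.inr e, Sum.inr f =>
        e ≠ f ∧ ((∃ v, v ∈ (e : Sym2 V) ∧ v ∈ (f : Sym2 V)) ∨
          ∃ a ∈ (e : Sym2 V), ∃ b ∈ (f : Sym2 V), G.Adj a b)
  symm := ⟨by
    rintro (u | e) (v | f) h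
    · exact h.symm
    · exact h
    · exact h
    · obtain ⟨hne, h⟩ := h
      refine ⟨hne.symm, ?_⟩
      rcases h with ⟨v, hv1, hv2⟩ | ⟨a, ha, b, hb, hab⟩
      · exact Or.inl ⟨v, hv2, hv1⟩
      · exact Or.inr ⟨b, hb, a, ha, hab.symm⟩⟩
  loopless := ⟨by
    rintro (u | e) h
    · exact G.loopless.irrefl u h
    · exact h.1 rfl⟩

/-- An utter clique: a pair [W, F] whose union is a clique of the utter graph. -/
def IsUtterClique (G : SimpleGraph V) (W : Finset V) (F : Finset G.edgeSet) : Prop :=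
  (utter G).IsClique (Sum.inl '' (W : Set V) ∪ Sum.inr '' (F : Set G.edgeSet))

/-- A maximal utter clique. -/
def IsMaxUtterClique (G : SimpleGraph V) (W : Finset V) (F : Finset G.edgeSet) : Prop :=
  IsUtterClique G W F ∧
    (∀ v ∉ W, ¬ IsUtterClique G (insert v W) F) ∧
    (∀ e ∉ F, ¬ IsUtterClique G W (insert e F))

/-- The contraction G/F: vertices are the connected components of the spanning
subgraph (V, F); two components are adjacent iff some edge of `G` joins them. -/
def contract {α : Type*} (G : SimpleGraph α) (F : Set (Sym2 α)) :
    SimpleGraph (SimpleGraph.fromEdgeSet F).ConnectedComponent where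
  Adj c d := c ≠ d ∧ ∃ u v, G.Adj u v ∧
      (SimpleGraph.fromEdgeSet F).connectedComponentMk u = c ∧
      (SimpleGraph.fromEdgeSet F).connectedComponentMk v = d
  symm := ⟨by
    rintro c d ⟨hne, u, v, h, hu, hv⟩
    exact ⟨hne.symm, v, u, h.symm, hv, hu⟩⟩
  loopless := ⟨by
    rintro c ⟨hne, _⟩
    exact hne rfl⟩

/-- A graph is perfect if every induced subgraph has chromatic number equal to
its clique number. -/
def IsPerfect {α : Type*} (G : SimpleGraph α) : Prop :=
  ∀ s : Set α, (G.induce s).chromaticNumber = ((G.induce s).cliqueNum : ℕ∞)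

/-- A graph is contraction perfect if all its contractions (by edge subsets) are perfect. -/
def ContractionPerfect (G : SimpleGraph V) : Prop :=
  ∀ F : Set (Sym2 V), F ⊆ G.edgeSet → IsPerfect (contract G F)

/-- Chordal: no induced cycle of length at least 4. -/
def Chordal (G : SimpleGraph V) : Prop :=
  ∀ n, 4 ≤ n → IsEmpty (SimpleGraph.cycleGraph n ↪g G)

/-- Maximal clique (as a finset). -/
def IsMaxCliqueF (G : SimpleGraph V) (K : Finset V) : Prop :=
  G.IsClique (K : Set V) ∧ ∀ K' : Finset V, G.IsClique (K' : Set V) → K ⊆ K' → K = K'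

/-- A 2-plex: every vertex of the induced subgraph has degree at least |K| - 2 in it. -/
def Is2Plex (G : SimpleGraph V) (K : Finset V) : Prop :=
  ∀ v ∈ K, K.card - 2 ≤ (K.filter fun u => G.Adj v u).card

/-- α₂(G[W]): the maximum cardinality of a co-2-plex contained in `W`. -/
def co2plexNumOn (G : SimpleGraph V) (W : Finset V) : ℕ :=
  Finset.univ.sup fun S : Finset V => if S ⊆ W ∧ IsCo2Plex G S then S.card else 0

/-- Facet-defining inequality of a full-dimensional polytope in ℝ^α: a valid
inequality whose tight points contain `card α` affinely independent points. -/
def IsFacet {α : Type*} [Fintype α] (P : Set (α → ℝ)) (a : α → ℝ) (c : ℝ) : Prop :=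
  (∀ x ∈ P, ∑ v, a v * x v ≤ c) ∧
  ∃ f : Fin (Fintype.card α) → (α → ℝ),
    AffineIndependent ℝ f ∧ ∀ i, f i ∈ P ∧ ∑ v, a v * f i v = c

/-- The polytope T(G) given by bounds and the star inequalities. -/
def TPoly (G : SimpleGraph V) [DecidableRel G.Adj] : Set (V → ℝ) :=
  {x | (∀ v, 0 ≤ x v ∧ x v ≤ 1) ∧
    ∀ (w : V), ∀ W ⊆ G.neighborFinset w,
      ∑ v ∈ W, x v + ((W.card : ℝ) - 1) * x w ≤ (W.card : ℝ)}

/-- Total dual integrality of the system `A x ≤ b`. -/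
def IsTDI {ι κ : Type*} [Fintype ι] [Fintype κ] (A : ι → κ → ℝ) (b : ι → ℝ) : Prop :=
  ∀ c : κ → ℤ, ∀ m : ℝ,
    IsGreatest {t | ∃ x : κ → ℝ, (∀ i, ∑ j, A i j * x j ≤ b i) ∧ t = ∑ j, (c j : ℝ) * x j} m →
    ∃ π : ι → ℤ, (∀ i, 0 ≤ π i) ∧ (∀ j, ∑ i, (π i : ℝ) * A i j = (c j : ℝ)) ∧
      ∑ i, (π i : ℝ) * b i = m


/-! For points satisfying (8) and (9) the left-hand side of the utter clique inequality only grows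
when `[W, F]` is enlarged. Adding an edge to `F` adds a term `y e ≥ 0`. Adding a vertex `v` to `W`
adds `x v` and removes only edges incident with `v`: those of `F` that no longer avoid `W`, and
those that become edges inside `W`. No edge is of both kinds, so the loss is at most
`y(δ(v)) ≤ x v`. Hence the inequality of `[W, F]` follows from that of a maximal utter clique
containing it. -/

def utterValue (G : SimpleGraph V) (x : V → ℝ) (y : G.edgeSet → ℝ) (W : Finset V)
    (F : Finset G.edgeSet) : ℝ :=
  ∑ v ∈ W, x v + ∑ e ∈ F ∩ edgesOut G W, y e - ∑ e ∈ edgesIn G W, y e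

theorem Finset.sum_le_sum_add_sum_of_subset_union {ι : Type*} [DecidableEq ι]
    {s t u : Finset ι} {f : ι → ℝ} (hf : ∀ i, 0 ≤ f i) (h : s ⊆ t ∪ u) :
    ∑ i ∈ s, f i ≤ ∑ i ∈ t, f i + ∑ i ∈ u, f i := by
  calc ∑ i ∈ s, f i ≤ ∑ i ∈ t ∪ u, f i := sum_le_sum_of_subset_of_nonneg h fun i _ _ => hf i
    _ ≤ ∑ i ∈ t ∪ u, f i + ∑ i ∈ t ∩ u, f i := le_add_of_nonneg_right (sum_nonneg fun i _ => hf i)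
    _ = ∑ i ∈ t, f i + ∑ i ∈ u, f i := sum_union_inter

section EdgeSets

variable (G : SimpleGraph V) (W : Finset V) (v : V)

theorem edgesOut_subset_edgesOut_insert_union :
    edgesOut G W ⊆ edgesOut G (insert v W) ∪ (edgesOut G W ∩ inc G v) := by
  intro e he
  simp only [edgesOut, inc, mem_union, mem_inter, mem_filter, mem_univ, true_and,
    mem_insert, not_or] at he ⊢
  by_cases hve : v ∈ (e : Sym2 V)
  · exact Or.inr ⟨he, hve⟩
  · exact Or.inl fun u hu => ⟨fun huv => hve (huv ▸ hu), he u hu⟩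

theorem edgesIn_insert_subset_edgesIn_union :
    edgesIn G (insert v W) ⊆ edgesIn G W ∪ (edgesIn G (insert v W) ∩ inc G v) := by
  intro e he
  simp only [edgesIn, inc, mem_union, mem_inter, mem_filter, mem_univ, true_and,
    mem_insert] at he ⊢
  by_cases hve : v ∈ (e : Sym2 V)
  · exact Or.inr ⟨he, hve⟩
  · exact Or.inl fun u hu => (he u hu).resolve_left fun huv => hve (huv ▸ hu)

theorem disjoint_edgesOut_inter_inc_edgesIn_insert :
    Disjoint (edgesOut G W ∩ inc G v) (edgesIn G (insert v W) ∩ inc G v) := by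
  rw [disjoint_left]
  rintro ⟨e, he⟩ hout hin
  simp only [edgesOut, edgesIn, inc, mem_inter, mem_filter, mem_univ, true_and,
    mem_insert] at hout hin
  obtain ⟨u, rfl⟩ := Sym2.mem_iff_exists.mp hout.2
  have hu : u = v :=
    (hin.1 u (Sym2.mem_mk_right v u)).resolve_right (hout.1 u (Sym2.mem_mk_right v u))
  exact (G.mem_edgeSet.mp he).ne hu.symm

end EdgeSets

section UtterValue

variable {G : SimpleGraph V} {x : V → ℝ} {y : G.edgeSet → ℝ}

theorem utterValue_le_insert {W : Finset V} (F : Finset G.edgeSet) {v : V} (hv : v ∉ W)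
    (hxv : ∑ e ∈ inc G v, y e ≤ x v) (hy : ∀ e, 0 ≤ y e) :
    utterValue G x y W F ≤ utterValue G x y (insert v W) F := by
  have hout : ∑ e ∈ F ∩ edgesOut G W, y e ≤
      ∑ e ∈ F ∩ edgesOut G (insert v W), y e + ∑ e ∈ edgesOut G W ∩ inc G v, y e := by
    refine sum_le_sum_add_sum_of_subset_union hy fun e he => ?_
    have := edgesOut_subset_edgesOut_insert_union G W v (mem_inter.mp he).2
    simp only [mem_union, mem_inter] at he this ⊢
    tauto
  have hin : ∑ e ∈ edgesIn G (insert v W), y e ≤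
      ∑ e ∈ edgesIn G W, y e + ∑ e ∈ edgesIn G (insert v W) ∩ inc G v, y e :=
    sum_le_sum_add_sum_of_subset_union hy (edgesIn_insert_subset_edgesIn_union G W v)
  have hinc : ∑ e ∈ edgesOut G W ∩ inc G v, y e +
      ∑ e ∈ edgesIn G (insert v W) ∩ inc G v, y e ≤ x v := by
    rw [← sum_union (disjoint_edgesOut_inter_inc_edgesIn_insert G W v)]
    refine le_trans (sum_le_sum_of_subset_of_nonneg ?_ fun e _ _ => hy e) hxv
    exact union_subset inter_subset_right inter_subset_right
  unfold utterValue
  rw [sum_insert hv]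
  linarith

theorem utterValue_le_of_subset_right (W : Finset V) {F F' : Finset G.edgeSet} (hF : F ⊆ F')
    (hy : ∀ e, 0 ≤ y e) : utterValue G x y W F ≤ utterValue G x y W F' := by
  have : ∑ e ∈ F ∩ edgesOut G W, y e ≤ ∑ e ∈ F' ∩ edgesOut G W, y e :=
    sum_le_sum_of_subset_of_nonneg (inter_subset_inter_right hF) fun e _ _ => hy e
  unfold utterValue
  linarith

theorem utterValue_le_union_left (D W : Finset V) (F : Finset G.edgeSet)
    (hx : ∀ v, ∑ e ∈ inc G v, y e ≤ x v) (hy : ∀ e, 0 ≤ y e) :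
    utterValue G x y W F ≤ utterValue G x y (D ∪ W) F := by
  induction D using Finset.induction_on with
  | empty => rw [empty_union]
  | insert v D _ ih =>
    rw [insert_union]
    by_cases hv : v ∈ D ∪ W
    · rwa [insert_eq_of_mem hv]
    · exact ih.trans (utterValue_le_insert F hv (hx v) hy)

theorem utterValue_mono {W W' : Finset V} {F F' : Finset G.edgeSet} (hW : W ⊆ W') (hF : F ⊆ F')
    (hx : ∀ v, ∑ e ∈ inc G v, y e ≤ x v) (hy : ∀ e, 0 ≤ y e) :
    utterValue G x y W F ≤ utterValue G x y W' F' := by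
  calc utterValue G x y W F ≤ utterValue G x y (W' \ W ∪ W) F :=
        utterValue_le_union_left _ W F hx hy
    _ = utterValue G x y W' F := by rw [sdiff_union_of_subset hW]
    _ ≤ utterValue G x y W' F' := utterValue_le_of_subset_right W' hF hy

end UtterValue

theorem IsUtterClique.exists_isMaxUtterClique {G : SimpleGraph V} {W : Finset V}
    {F : Finset G.edgeSet} (h : IsUtterClique G W F) :
    ∃ W' F', W ⊆ W' ∧ F ⊆ F' ∧ IsMaxUtterClique G W' F' := by
  obtain ⟨⟨W', F'⟩, ⟨hW, hF⟩, hmax⟩ := Finite.exists_le_maximal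
    (p := fun p : Finset V × Finset G.edgeSet => IsUtterClique G p.1 p.2) (a := (W, F)) h
  refine ⟨W', F', hW, hF, hmax.prop, fun v hv hc => hv ?_, fun e he hc => he ?_⟩
  · have := hmax.le_of_ge (y := (insert v W', F')) hc ⟨subset_insert v W', le_rfl⟩
    exact this.1 (mem_insert_self v W')
  · have := hmax.le_of_ge (y := (W', insert e F')) hc ⟨le_rfl, subset_insert e F'⟩
    exact this.2 (mem_insert_self e F')

/-- The inequality of any (not necessarily maximal) utter clique
is implied by the system (7)-(9). -/
theorem stmt1 (G : SimpleGraph V) (W : Finset V) (F : Finset G.edgeSet)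
    (hWF : IsUtterClique G W F)
    (x : V → ℝ) (y : G.edgeSet → ℝ)
    (h7 : ∀ (W' : Finset V) (F' : Finset G.edgeSet), IsMaxUtterClique G W' F' →
      ∑ v ∈ W', x v + ∑ e ∈ F' ∩ edgesOut G W', y e - ∑ e ∈ edgesIn G W', y e ≤ 1)
    (h8 : ∀ v : V, ∑ e ∈ inc G v, y e ≤ x v)
    (h9 : ∀ e : G.edgeSet, 0 ≤ y e) :
    ∑ v ∈ W, x v + ∑ e ∈ F ∩ edgesOut G W, y e - ∑ e ∈ edgesIn G W, y e ≤ 1 := by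
  obtain ⟨W', F', hW, hF, hmax⟩ := hWF.exists_isMaxUtterClique
  exact (utterValue_mono hW hF h8 h9).trans (h7 W' F' hmax)

end
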